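/- Let n ≥ 3 be an integer and 1 ≤ q ≤ ∞ (so a = (n−1)^{1/q} ≥ 1 and b = 2^{1/q} with 1 ≤ b ≤ 2). Then (a/((a+1)(a+2−b))) · (1 + (1/(n−1)) · a/(a+2−b))^{n−1} < 1. (This is the value φ(R) at R = 1/(2a+2) of the function φ(x) = a x²/((1−(a+1)x)(1−(a+b)x)) · (1 + (1/(n−1)) · ax/(1−(a+b)x))^{n−1}.) -/

import Mathlib

open Polynomial Filter Finset Function Metric

noncomputable section

/-- Weierstrass correction `W_i(z) = f(z_i) / ∏_{j ≠ i} (z_i - z_j)`. -/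
def Wc {n : ℕ} (f : Polynomial ℂ) (z : Fin n → ℂ) (i : Fin n) : ℂ :=
  f.eval (z i) / ∏ j ∈ univ.erase i, (z i - z j)

/-- `d_i(z) = min_{j ≠ i} |z_i - z_j|`. -/
def dd {n : ℕ} (z : Fin n → ℂ) (i : Fin n) : ℝ :=
  ⨅ j : {j : Fin n // j ≠ i}, ‖z i - z j.1‖

/-- The `p`-norm on `ℂⁿ` for `p ∈ [1, ∞]`. -/
def pnorm {n : ℕ} (p : ENNReal) (v : Fin n → ℂ) : ℝ :=
  if p = ⊤ then ⨆ i, ‖v i‖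
  else (∑ i, ‖v i‖ ^ p.toReal) ^ (1 / p.toReal)

/-- `E(z) = ‖(W_1(z)/d_1(z), …, W_n(z)/d_n(z))‖_p`. -/
def Ep {n : ℕ} (p : ENNReal) (f : Polynomial ℂ) (z : Fin n → ℂ) : ℝ :=
  pnorm p (fun i => Wc f z i / (dd z i : ℂ))

/-- `a = (n-1)^{1/q}` (with `t^{1/∞} = 1`). -/
def aa (n : ℕ) (q : ENNReal) : ℝ := ((n : ℝ) - 1) ^ (1 / q).toReal

/-- `b = 2^{1/q}` (with `2^{1/∞} = 1`). -/
def bb (q : ENNReal) : ℝ := (2 : ℝ) ^ (1 / q).toReal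

/-- `ξ` is a root-vector of `f` iff `f = ∏ (X - ξᵢ)`. -/
def IsRootVec {n : ℕ} (f : Polynomial ℂ) (ξ : Fin n → ℂ) : Prop :=
  f = ∏ i, (X - Polynomial.C (ξ i))

/-- Denominator in Ehrlich's iteration function. -/
def ehrlichDen {n : ℕ} (f : Polynomial ℂ) (z : Fin n → ℂ) (i : Fin n) : ℂ :=
  1 + ∑ j ∈ univ.erase i, Wc f z j / (z i - z j)

/-- Ehrlich's iteration function. -/
def ehrlichF {n : ℕ} (f : Polynomial ℂ) (z : Fin n → ℂ) : Fin n → ℂ :=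
  fun i => z i - Wc f z i / ehrlichDen f z i

/-- Ehrlich's iterative sequence `z^{k+1} = F(z^k)`. -/
def EhrlichSeq {n : ℕ} (f : Polynomial ℂ) (z0 : Fin n → ℂ) (k : ℕ) : Fin n → ℂ :=
  (ehrlichF f)^[k] z0

/-- Well-definedness of Ehrlich's sequence: every iterate has pairwise distinct
components and all denominators are nonzero. -/
def EhrlichWellDef {n : ℕ} (f : Polynomial ℂ) (z0 : Fin n → ℂ) : Prop :=
  ∀ k : ℕ, Function.Injective (EhrlichSeq f z0 k) ∧
    ∀ i, ehrlichDen f (EhrlichSeq f z0 k) i ≠ 0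

/-- Denominator in Nourein's iteration function. -/
def noureinDen {n : ℕ} (f : Polynomial ℂ) (z : Fin n → ℂ) (i : Fin n) : ℂ :=
  1 + ∑ j ∈ univ.erase i, Wc f z j / (z i - z j - Wc f z i)

/-- Nourein's iteration function. -/
def noureinG {n : ℕ} (f : Polynomial ℂ) (z : Fin n → ℂ) : Fin n → ℂ :=
  fun i => z i - Wc f z i / noureinDen f z i

/-- Nourein's iterative sequence `z^{k+1} = G(z^k)`. -/
def NoureinSeq {n : ℕ} (f : Polynomial ℂ) (z0 : Fin n → ℂ) (k : ℕ) : Fin n → ℂ :=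
  (noureinG f)^[k] z0

/-- Well-definedness of Nourein's sequence. -/
def NoureinWellDef {n : ℕ} (f : Polynomial ℂ) (z0 : Fin n → ℂ) : Prop :=
  ∀ k : ℕ, Function.Injective (NoureinSeq f z0 k) ∧
    ∀ i, noureinDen f (NoureinSeq f z0 k) i ≠ 0

/-- The function `φ` of Theorem 2.1 (localization theorem). -/
def phiW (n : ℕ) (p q : ENNReal) (x : ℝ) : ℝ :=
  aa n q * x / ((1 - x) * (1 - bb q * x)) *
    (1 + x / (((n : ℝ) - 1) ^ (1 / p).toReal * (1 - bb q * x))) ^ (n - 1)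

/-- The function `φ` of the Ehrlich convergence theorem. -/
def phiE (n : ℕ) (q : ENNReal) (x : ℝ) : ℝ :=
  aa n q * x ^ 2 / ((1 - (aa n q + 1) * x) * (1 - (aa n q + bb q) * x)) *
    (1 + (1 / ((n : ℝ) - 1)) * (aa n q * x / (1 - (aa n q + bb q) * x))) ^ (n - 1)

/-- The function `ψ` of the Ehrlich convergence theorem. -/
def psiE (n : ℕ) (q : ENNReal) (x : ℝ) : ℝ :=
  (1 - (aa n q + bb q) * x) / (1 - aa n q * x)

/-- The function `μ` of the Ehrlich convergence theorem. -/
def muE (n : ℕ) (q : ENNReal) (x : ℝ) : ℝ := 1 / (1 - aa n q * x)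

/-- The function `φ` of the Nourein convergence theorem (with `m = a + b + 1`). -/
def phiN (n : ℕ) (q : ENNReal) (x : ℝ) : ℝ :=
  aa n q ^ 2 * x ^ 3 /
      ((1 - (aa n q + bb q + 1) * x + bb q * x ^ 2) * (1 - (aa n q + 2) * x + x ^ 2)) *
    (1 + (1 / ((n : ℝ) - 1)) *
        (aa n q * (x - x ^ 2) / (1 - (aa n q + bb q + 1) * x + bb q * x ^ 2))) ^ (n - 1)

/-- The function `ψ` of the Nourein convergence theorem. -/
def psiN (n : ℕ) (q : ENNReal) (x : ℝ) : ℝ :=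
  (1 - (aa n q + bb q + 1) * x + bb q * x ^ 2) / (1 - (aa n q + 1) * x)

/-- The function `μ` of the Nourein convergence theorem. -/
def muN (n : ℕ) (q : ENNReal) (x : ℝ) : ℝ := (1 - x) / (1 - (aa n q + 1) * x)

/-! With `c = a / (a + 2 - b) ∈ [0, 1]`, the first factor is at most `1 / 3`
(since `a + 2 - b ≥ max a 2`), and the second is
`(1 + c / (n - 1)) ^ (n - 1) ≤ exp c ≤ e < 3`. -/

theorem ENNReal.toReal_one_div_le_one {q : ENNReal} (hq : 1 ≤ q) : (1 / q).toReal ≤ 1 :=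
  ENNReal.toReal_le_of_le_ofReal zero_le_one <| by
    simpa [one_div] using ENNReal.inv_le_one.2 hq

theorem Real.one_add_one_div_mul_pow_le_exp {m : ℕ} {c : ℝ} (hc : -(m : ℝ) ≤ c) :
    (1 + 1 / (m : ℝ) * c) ^ m ≤ Real.exp c := by
  convert Real.one_sub_div_pow_le_exp_neg (n := m) (t := -c) (by linarith) using 2 <;> ring

theorem div_add_one_mul_le_one_third {a d : ℝ} (ha : 0 < a) (hd : 2 ≤ d) (had : a ≤ d) :
    a / ((a + 1) * d) ≤ 1 / 3 := by
  rw [div_le_div_iff₀ (by positivity) three_pos]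
  nlinarith [mul_nonneg (sub_nonneg.2 had) ha.le, sq_nonneg (a - 2)]

theorem one_le_aa {n : ℕ} (hn : 2 ≤ n) (q : ENNReal) : 1 ≤ aa n q := by
  have : (2 : ℝ) ≤ n := by exact_mod_cast hn
  exact Real.one_le_rpow (by linarith) ENNReal.toReal_nonneg

theorem bb_le_two {q : ENNReal} (hq : 1 ≤ q) : bb q ≤ 2 :=
  (Real.rpow_le_rpow_of_exponent_le one_le_two (ENNReal.toReal_one_div_le_one hq)).trans_eq
    (Real.rpow_one 2)

theorem bb_le_aa {n : ℕ} (hn : 3 ≤ n) (q : ENNReal) : bb q ≤ aa n q := by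
  have : (3 : ℝ) ≤ n := by exact_mod_cast hn
  exact Real.rpow_le_rpow zero_le_two (by linarith) ENNReal.toReal_nonneg

theorem stmt_8 (n : ℕ) (hn : 3 ≤ n) (q : ENNReal) (hq : 1 ≤ q) :
    aa n q / ((aa n q + 1) * (aa n q + 2 - bb q)) *
      (1 + (1 / ((n : ℝ) - 1)) * (aa n q / (aa n q + 2 - bb q))) ^ (n - 1) < 1 := by
  have ha := one_le_aa (by omega : 2 ≤ n) q
  have hba := bb_le_aa hn q
  have hb2 := bb_le_two hq
  set a := aa n q
  set b := bb q
  have hc0 : 0 ≤ a / (a + 2 - b) := div_nonneg (by linarith) (by linarith)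
  have hc1 : a / (a + 2 - b) ≤ 1 := (div_le_one (by linarith)).2 (by linarith)
  have hcast : (n : ℝ) - 1 = ((n - 1 : ℕ) : ℝ) := by
    push_cast [Nat.cast_sub (by omega : 1 ≤ n)]; ring
  have hfirst : a / ((a + 1) * (a + 2 - b)) ≤ 1 / 3 :=
    div_add_one_mul_le_one_third (by linarith) (by linarith) (by linarith)
  have hsecond : (1 + (1 / ((n : ℝ) - 1)) * (a / (a + 2 - b))) ^ (n - 1) ≤ Real.exp 1 := by
    rw [hcast]
    have hm : -((n - 1 : ℕ) : ℝ) ≤ a / (a + 2 - b) := by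
      linarith [Nat.cast_nonneg (α := ℝ) (n - 1)]
    exact (Real.one_add_one_div_mul_pow_le_exp hm).trans (Real.exp_le_exp.2 hc1)
  calc _ ≤ 1 / 3 * Real.exp 1 :=
        mul_le_mul hfirst hsecond (by rw [hcast]; positivity) (by norm_num)
    _ < 1 := by linarith [Real.exp_one_lt_d9]

end
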